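/- With Bob's unitary U_B(θ,k) = cos(θ)I + i k sin(θ)(I⊗σ_y) applied after Alice's measurement on the thermal state, the energy change satisfies E_B − E_A = p(1 − cos 2θ) − q sin 2θ, where p = (B sinh(βB) + α sinh(βα))/Z and q = (B sinh(βα) − α sinh(βB))/Z; its minimum over θ is p − √(p²+q²), which is strictly negative whenever q ≠ 0. -/

import Mathlib

open Matrix
open scoped Kronecker

noncomputable section

/-- Pauli matrices -/
def σx : Matrix (Fin 2) (Fin 2) ℂ := !![0, 1; 1, 0]
def σy : Matrix (Fin 2) (Fin 2) ℂ := !![0, -Complex.I; Complex.I, 0]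
def σz : Matrix (Fin 2) (Fin 2) ℂ := !![1, 0; 0, -1]

/-- Raising and lowering operators σ± = (σx ± i σy)/2 -/
def σp : Matrix (Fin 2) (Fin 2) ℂ := (2 : ℂ)⁻¹ • (σx + Complex.I • σy)
def σm : Matrix (Fin 2) (Fin 2) ℂ := (2 : ℂ)⁻¹ • (σx - Complex.I • σy)

/-- XY Hamiltonian H = (B/2)(σz⊗I + I⊗σz) + α(σ₊⊗σ₋ + σ₋⊗σ₊) -/
def Ham (B α : ℝ) : Matrix (Fin 2 × Fin 2) (Fin 2 × Fin 2) ℂ :=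
  ((B : ℂ) / 2) • (σz ⊗ₖ (1 : Matrix (Fin 2) (Fin 2) ℂ) + (1 : Matrix (Fin 2) (Fin 2) ℂ) ⊗ₖ σz)
    + (α : ℂ) • (σp ⊗ₖ σm + σm ⊗ₖ σp)

/-- Standard basis kets -/
def ket (a : Fin 2) : Fin 2 → ℂ := fun i => if i = a then 1 else 0
def ket2 (a b : Fin 2) : Fin 2 × Fin 2 → ℂ := fun p => ket a p.1 * ket b p.2

/-- Bell states (|01⟩ ± |10⟩)/√2 -/
def ψplus : Fin 2 × Fin 2 → ℂ := ((Real.sqrt 2 : ℂ))⁻¹ • (ket2 0 1 + ket2 1 0)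
def ψminus : Fin 2 × Fin 2 → ℂ := ((Real.sqrt 2 : ℂ))⁻¹ • (ket2 0 1 - ket2 1 0)

/-- Alice's measurement operators M_A(k) = ((I + k σx)/2) ⊗ I -/
def MA (k : ℝ) : Matrix (Fin 2 × Fin 2) (Fin 2 × Fin 2) ℂ :=
  ((2 : ℂ)⁻¹ • ((1 : Matrix (Fin 2) (Fin 2) ℂ) + (k : ℂ) • σx)) ⊗ₖ (1 : Matrix (Fin 2) (Fin 2) ℂ)

/-- Partition function Z = 2(cosh βα + cosh βB) -/
def Zf (β B α : ℝ) : ℝ := 2 * (Real.cosh (β * α) + Real.cosh (β * B))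

/-- Thermal state ρ = e^{-βH}/Z -/
def ρth (β B α : ℝ) : Matrix (Fin 2 × Fin 2) (Fin 2 × Fin 2) ℂ :=
  ((Zf β B α : ℂ))⁻¹ • NormedSpace.exp ((-(β : ℂ)) • Ham B α)

/-- Bob's local unitary U_B(θ,k) = cos θ · I + i k sin θ (I⊗σy) -/
def UB (θ k : ℝ) : Matrix (Fin 2 × Fin 2) (Fin 2 × Fin 2) ℂ :=
  (Real.cos θ : ℂ) • (1 : Matrix (Fin 2 × Fin 2) (Fin 2 × Fin 2) ℂ)
    + (Complex.I * k * Real.sin θ) • ((1 : Matrix (Fin 2) (Fin 2) ℂ) ⊗ₖ σy)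

end

/-!
The Gibbs matrix `e^{-βH}` is explicit because `H` is diagonal in the basis `|00⟩`,
`|01⟩ ± |10⟩`, `|11⟩`. Alice's two outcomes `k = ±1` dephase the state in the `σx`-basis of her
qubit: `Σ_k M_k ρ M_k = (ρ + XρX)/2` and `Σ_k k M_k ρ M_k = (Xρ + ρX)/2`. Bob's rotation
`U_k = cos θ + i k sin θ Y` acts by `ρ ↦ cos²θ ρ + i k cos θ sin θ [Y, ρ] + sin²θ YρY`, so
`E_B - E_A` is a combination of `sin²θ` and `sin θ cos θ` whose coefficients are three traces
against the Gibbs matrix. The minimum over `θ` then comes from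
`p cos t + q sin t ≤ √(p² + q²)`, with equality at `t = arg (p + i q)`.
-/

noncomputable section

section
variable {𝕜 R : Type*} [Field 𝕜] [Ring R] [Algebra 𝕜 R]

theorem half_conj_add_half_conj (X A : R) :
    ((2 : 𝕜)⁻¹ • (1 + X)) * A * ((2 : 𝕜)⁻¹ • (1 + X))
      + ((2 : 𝕜)⁻¹ • (1 - X)) * A * ((2 : 𝕜)⁻¹ • (1 - X)) = (2 : 𝕜)⁻¹ • (A + X * A * X) := by
  have h : (1 + X) * A * (1 + X) + (1 - X) * A * (1 - X) = (2 : 𝕜) • (A + X * A * X) := by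
    rw [two_smul]; noncomm_ring
  simp only [smul_mul_assoc, mul_smul_comm, smul_smul, ← smul_add, h]
  rcases eq_or_ne (2 : 𝕜) 0 with h2 | h2
  · simp [h2]
  · rw [inv_mul_cancel_right₀ h2]

theorem half_conj_sub_half_conj (X A : R) :
    ((2 : 𝕜)⁻¹ • (1 + X)) * A * ((2 : 𝕜)⁻¹ • (1 + X))
      - ((2 : 𝕜)⁻¹ • (1 - X)) * A * ((2 : 𝕜)⁻¹ • (1 - X)) = (2 : 𝕜)⁻¹ • (X * A + A * X) := by
  have h : (1 + X) * A * (1 + X) - (1 - X) * A * (1 - X) = (2 : 𝕜) • (X * A + A * X) := by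
    rw [two_smul]; noncomm_ring
  simp only [smul_mul_assoc, mul_smul_comm, smul_smul, ← smul_sub, h]
  rcases eq_or_ne (2 : 𝕜) 0 with h2 | h2
  · simp [h2]
  · rw [inv_mul_cancel_right₀ h2]

end

theorem cos_smul_one_add_I_sin_smul_conj {n : Type*} [Fintype n] [DecidableEq n]
    {Y : Matrix n n ℂ} (hY : Y.IsHermitian) (c s : ℝ) (A : Matrix n n ℂ) :
    ((c : ℂ) • 1 + (Complex.I * s) • Y) * A * ((c : ℂ) • 1 + (Complex.I * s) • Y)ᴴ
      = ((c : ℂ) ^ 2) • A + (Complex.I * c * s) • (Y * A - A * Y)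
        + ((s : ℂ) ^ 2) • (Y * A * Y) := by
  simp only [conjTranspose_add, conjTranspose_smul, conjTranspose_one, hY.eq, star_mul',
    Complex.star_def, Complex.conj_ofReal, Complex.conj_I]
  simp only [add_mul, mul_add, smul_mul_assoc, mul_smul_comm, one_mul, mul_one]
  match_scalars <;> ring_nf
  simp [Complex.I_sq]

section
open Real

theorem mul_cos_add_mul_sin_le_sqrt (p q t : ℝ) : p * cos t + q * sin t ≤ √(p ^ 2 + q ^ 2) :=
  le_sqrt_of_sq_le <| by nlinarith [sq_nonneg (p * sin t - q * cos t), sin_sq_add_cos_sq t]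

theorem exists_mul_cos_add_mul_sin_eq_sqrt (p q : ℝ) :
    ∃ t, p * cos t + q * sin t = √(p ^ 2 + q ^ 2) := by
  let z : ℂ := ⟨p, q⟩
  refine ⟨Complex.arg z, ?_⟩
  have hp : ‖z‖ * cos (Complex.arg z) = p := Complex.norm_mul_cos_arg z
  have hq : ‖z‖ * sin (Complex.arg z) = q := Complex.norm_mul_sin_arg z
  rw [← Complex.norm_eq_sqrt_sq_add_sq z, ← hp, ← hq]
  linear_combination ‖z‖ * sin_sq_add_cos_sq (Complex.arg z)

theorem isLeast_range_mul_one_sub_cos_sub_mul_sin (p q : ℝ) :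
    IsLeast (Set.range fun θ : ℝ => p * (1 - cos (2 * θ)) - q * sin (2 * θ))
      (p - √(p ^ 2 + q ^ 2)) := by
  refine ⟨?_, ?_⟩
  · obtain ⟨t, ht⟩ := exists_mul_cos_add_mul_sin_eq_sqrt p q
    exact ⟨t / 2, by simp only [mul_div_cancel₀ t two_ne_zero, ← ht]; ring⟩
  · rintro _ ⟨θ, rfl⟩
    linarith [mul_cos_add_mul_sin_le_sqrt p q (2 * θ)]

theorem sub_sqrt_sq_add_sq_neg {p q : ℝ} (hq : q ≠ 0) : p - √(p ^ 2 + q ^ 2) < 0 :=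
  sub_neg.2 <| lt_sqrt_of_sq_lt <| lt_add_of_pos_right _ (by positivity)

end

local notation "X₁" => σx ⊗ₖ (1 : Matrix (Fin 2) (Fin 2) ℂ)
local notation "Y₂" => (1 : Matrix (Fin 2) (Fin 2) ℂ) ⊗ₖ σy

theorem MA_eq (k : ℝ) : MA k = (2 : ℂ)⁻¹ • (1 + (k : ℂ) • X₁) := by
  rw [MA, smul_kronecker, add_kronecker, smul_kronecker, one_kronecker_one]

theorem MA_conj_add (A : Matrix (Fin 2 × Fin 2) (Fin 2 × Fin 2) ℂ) :
    MA 1 * A * MA 1 + MA (-1) * A * MA (-1) = (2 : ℂ)⁻¹ • (A + X₁ * A * X₁) := by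
  simpa [MA_eq, sub_eq_add_neg] using half_conj_add_half_conj (𝕜 := ℂ) X₁ A

theorem MA_conj_sub (A : Matrix (Fin 2 × Fin 2) (Fin 2 × Fin 2) ℂ) :
    MA 1 * A * MA 1 - MA (-1) * A * MA (-1) = (2 : ℂ)⁻¹ • (X₁ * A + A * X₁) := by
  simpa [MA_eq, sub_eq_add_neg] using half_conj_sub_half_conj (𝕜 := ℂ) X₁ A

theorem isHermitian_one_kronecker_σy : (Y₂).IsHermitian := by
  have hσy : σyᴴ = σy := by ext i j; fin_cases i <;> fin_cases j <;> simp [σy]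
  rw [IsHermitian, conjTranspose_kronecker, conjTranspose_one, hσy]

theorem UB_eq (θ k : ℝ) :
    UB θ k = ((Real.cos θ : ℝ) : ℂ) • 1 + (Complex.I * ((k * Real.sin θ : ℝ) : ℂ)) • Y₂ := by
  rw [UB]; push_cast; ring_nf

theorem UB_conj_add_UB_conj (θ : ℝ) (A A' : Matrix (Fin 2 × Fin 2) (Fin 2 × Fin 2) ℂ) :
    UB θ 1 * A * (UB θ 1)ᴴ + UB θ (-1) * A' * (UB θ (-1))ᴴ
      = ((Real.cos θ : ℂ) ^ 2) • (A + A')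
        + (Complex.I * Real.cos θ * Real.sin θ) • (Y₂ * (A - A') - (A - A') * Y₂)
        + ((Real.sin θ : ℂ) ^ 2) • (Y₂ * (A + A') * Y₂) := by
  rw [UB_eq, UB_eq, cos_smul_one_add_I_sin_smul_conj isHermitian_one_kronecker_σy,
    cos_smul_one_add_I_sin_smul_conj isHermitian_one_kronecker_σy]
  simp only [mul_add, mul_sub, add_mul, sub_mul]
  push_cast
  module

def gibbsMatrix (β B α : ℝ) : Matrix (Fin 2 × Fin 2) (Fin 2 × Fin 2) ℂ := fun p q =>
  if p = (0, 0) ∧ q = (0, 0) then (Real.exp (-(β * B)) : ℂ)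
  else if p = (1, 1) ∧ q = (1, 1) then (Real.exp (β * B) : ℂ)
  else if p = (0, 1) ∧ q = (0, 1) ∨ p = (1, 0) ∧ q = (1, 0) then (Real.cosh (β * α) : ℂ)
  else if p = (0, 1) ∧ q = (1, 0) ∨ p = (1, 0) ∧ q = (0, 1) then -(Real.sinh (β * α) : ℂ)
  else 0

/-- The columns are the eigenvectors `|00⟩, |01⟩ + |10⟩, |01⟩ - |10⟩, |11⟩` of `Ham B α`. -/
def hamEigenbasis : Matrix (Fin 2 × Fin 2) (Fin 2 × Fin 2) ℂ := fun p q =>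
  if p = q ∧ (p = (0, 0) ∨ p = (1, 1)) then 1
  else if p.1 ≠ p.2 ∧ q.1 ≠ q.2 then
    (if p = (1, 0) ∧ q = (1, 0) then -1 else 1)
  else 0

def hamEigenbasisInv : Matrix (Fin 2 × Fin 2) (Fin 2 × Fin 2) ℂ := fun p q =>
  if p = q ∧ (p = (0, 0) ∨ p = (1, 1)) then 1
  else if p.1 ≠ p.2 ∧ q.1 ≠ q.2 then
    (if p = (1, 0) ∧ q = (1, 0) then -2⁻¹ else 2⁻¹)
  else 0

def hamEigenvalues (B α : ℝ) : Fin 2 × Fin 2 → ℂ := fun p =>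
  if p = (0, 0) then B else if p = (1, 1) then -B else if p = (0, 1) then α else -α

theorem hamEigenbasis_mul_inv : hamEigenbasis * hamEigenbasisInv = 1 := by
  ext ⟨i, j⟩ ⟨k, l⟩
  fin_cases i <;> fin_cases j <;> fin_cases k <;> fin_cases l <;>
    simp [mul_apply, hamEigenbasis, hamEigenbasisInv, one_apply, Fintype.sum_prod_type,
      Fin.sum_univ_succ] <;> norm_num

theorem Ham_eq_conj_diagonal (B α : ℝ) :
    Ham B α = hamEigenbasis * diagonal (hamEigenvalues B α) * hamEigenbasisInv := by
  ext ⟨i, j⟩ ⟨k, l⟩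
  fin_cases i <;> fin_cases j <;> fin_cases k <;> fin_cases l <;>
    simp [mul_apply, hamEigenbasis, hamEigenbasisInv, hamEigenvalues, Ham, σp, σm, σx, σy, σz,
      one_apply, Fintype.sum_prod_type, Fin.sum_univ_succ] <;> ring

theorem exp_neg_smul_Ham (β B α : ℝ) :
    NormedSpace.exp ((-(β : ℂ)) • Ham B α) = gibbsMatrix β B α := by
  have hconj : (-(β : ℂ)) • Ham B α
      = hamEigenbasis * diagonal ((-(β : ℂ)) • hamEigenvalues B α) * hamEigenbasisInv := by
    rw [Ham_eq_conj_diagonal, diagonal_smul, Matrix.mul_smul, Matrix.smul_mul]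
  rw [hconj]
  refine (Matrix.exp_units_conj ⟨hamEigenbasis, hamEigenbasisInv, hamEigenbasis_mul_inv,
    mul_eq_one_comm.mp hamEigenbasis_mul_inv⟩ _).trans ?_
  rw [exp_diagonal]
  ext ⟨i, j⟩ ⟨k, l⟩
  fin_cases i <;> fin_cases j <;> fin_cases k <;> fin_cases l <;>
    simp [mul_apply, hamEigenbasis, hamEigenbasisInv, hamEigenvalues, gibbsMatrix,
      Pi.exp_def, Fintype.sum_prod_type, Fin.sum_univ_succ, Real.cosh_eq, Real.sinh_eq,
      ← Complex.exp_eq_exp_ℂ] <;> ring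

theorem trace_Ham_gibbsMatrix_dephased (β B α : ℝ) :
    (Ham B α * (gibbsMatrix β B α + X₁ * gibbsMatrix β B α * X₁)).trace
      = -2 * ((B * Real.sinh (β * B) + α * Real.sinh (β * α) : ℝ) : ℂ) := by
  simp [Matrix.trace, mul_apply, Fintype.sum_prod_type, Fin.sum_univ_succ,
    Ham, σp, σm, σx, σy, σz, gibbsMatrix, one_apply, Real.sinh_eq]
  ring

theorem trace_Ham_Y₂_gibbsMatrix_dephased_Y₂ (β B α : ℝ) :
    (Ham B α * (Y₂ * (gibbsMatrix β B α + X₁ * gibbsMatrix β B α * X₁) * Y₂)).trace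
      = 2 * ((B * Real.sinh (β * B) + α * Real.sinh (β * α) : ℝ) : ℂ) := by
  simp [Matrix.trace, mul_apply, Fintype.sum_prod_type, Fin.sum_univ_succ,
    Ham, σp, σm, σx, σy, σz, gibbsMatrix, one_apply, Real.sinh_eq]
  ring_nf
  simp [Complex.I_sq]
  ring

theorem trace_Ham_commutator_Y₂ (β B α : ℝ) :
    (Ham B α * (Y₂ * (X₁ * gibbsMatrix β B α + gibbsMatrix β B α * X₁)
      - (X₁ * gibbsMatrix β B α + gibbsMatrix β B α * X₁) * Y₂)).trace
      = 4 * Complex.I * ((B * Real.sinh (β * α) - α * Real.sinh (β * B) : ℝ) : ℂ) := by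
  simp [Matrix.trace, mul_apply, Fintype.sum_prod_type, Fin.sum_univ_succ,
    Ham, σp, σm, σx, σy, σz, gibbsMatrix, one_apply, Real.sinh_eq]
  ring_nf

theorem trace_Ham_teleported_sub_trace_Ham_measured (β B α θ : ℝ) :
    (Ham B α * (UB θ 1 * (MA 1 * gibbsMatrix β B α * MA 1) * (UB θ 1)ᴴ
        + UB θ (-1) * (MA (-1) * gibbsMatrix β B α * MA (-1)) * (UB θ (-1))ᴴ)).trace
      - (Ham B α
          * (MA 1 * gibbsMatrix β B α * MA 1 + MA (-1) * gibbsMatrix β B α * MA (-1))).trace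
      = (((B * Real.sinh (β * B) + α * Real.sinh (β * α)) * (1 - Real.cos (2 * θ))
          - (B * Real.sinh (β * α) - α * Real.sinh (β * B)) * Real.sin (2 * θ) : ℝ) : ℂ) := by
  rw [UB_conj_add_UB_conj, MA_conj_add, MA_conj_sub]
  generalize hS : gibbsMatrix β B α + X₁ * gibbsMatrix β B α * X₁ = S
  generalize hD : X₁ * gibbsMatrix β B α + gibbsMatrix β B α * X₁ = D
  simp only [Matrix.mul_smul, Matrix.smul_mul, ← smul_sub, mul_add, trace_add, trace_smul,
    smul_eq_mul]
  rw [← hS, ← hD, trace_Ham_gibbsMatrix_dephased, trace_Ham_Y₂_gibbsMatrix_dephased_Y₂,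
    trace_Ham_commutator_Y₂]
  push_cast
  rw [Complex.cos_two_mul, Complex.sin_two_mul]
  linear_combination (↑B * Complex.sinh (↑β * ↑B) + ↑α * Complex.sinh (↑β * ↑α))
      * Complex.sin_sq_add_cos_sq (θ : ℂ)
    + 2 * Complex.cos ↑θ * Complex.sin ↑θ
      * (↑B * Complex.sinh (↑β * ↑α) - ↑α * Complex.sinh (↑β * ↑B)) * Complex.I_sq

theorem teleported_energy_thermal_general (β B α : ℝ) :
    let Z : ℝ := Zf β B α
    let p : ℝ := (B * Real.sinh (β * B) + α * Real.sinh (β * α)) / Z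
    let q : ℝ := (B * Real.sinh (β * α) - α * Real.sinh (β * B)) / Z
    let EA : ℂ := (Ham B α *
      (MA 1 * ρth β B α * MA 1 + MA (-1) * ρth β B α * MA (-1))).trace
    let EB : ℝ → ℂ := fun θ => (Ham B α *
      (UB θ 1 * MA 1 * ρth β B α * MA 1 * (UB θ 1)ᴴ
        + UB θ (-1) * MA (-1) * ρth β B α * MA (-1) * (UB θ (-1))ᴴ)).trace
    (∀ θ : ℝ, EB θ - EA
        = ((p * (1 - Real.cos (2 * θ)) - q * Real.sin (2 * θ) : ℝ) : ℂ)) ∧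
    IsLeast (Set.range fun θ : ℝ => p * (1 - Real.cos (2 * θ)) - q * Real.sin (2 * θ))
      (p - Real.sqrt (p ^ 2 + q ^ 2)) ∧
    (q ≠ 0 → p - Real.sqrt (p ^ 2 + q ^ 2) < 0) := by
  intro Z p q EA EB
  have hρ : ρth β B α = (Z : ℂ)⁻¹ • gibbsMatrix β B α := by rw [ρth, exp_neg_smul_Ham]
  refine ⟨fun θ => ?_, isLeast_range_mul_one_sub_cos_sub_mul_sin p q,
    sub_sqrt_sq_add_sq_neg⟩
  have h := trace_Ham_teleported_sub_trace_Ham_measured β B α θ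
  simp only [Matrix.mul_assoc] at h
  simp only [EB, EA, hρ, Matrix.mul_smul, Matrix.smul_mul, ← smul_add, trace_smul, smul_eq_mul,
    ← mul_sub, Matrix.mul_assoc, h, p, q]
  push_cast
  ring

/-- With Bob's unitary U_B(θ,k) after Alice's measurement on the thermal state,
    E_B - E_A = p(1 - cos 2θ) - q sin 2θ with p = (B sinh βB + α sinh βα)/Z and
    q = (B sinh βα - α sinh βB)/Z; the minimum over θ is p - √(p²+q²) < 0 when q ≠ 0. -/
theorem teleported_energy_thermal (β B α : ℝ) (hβ : 0 < β) (hB : 0 < B) (hα : 0 < α) :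
    let Z : ℝ := Zf β B α
    let p : ℝ := (B * Real.sinh (β * B) + α * Real.sinh (β * α)) / Z
    let q : ℝ := (B * Real.sinh (β * α) - α * Real.sinh (β * B)) / Z
    let EA : ℂ := (Ham B α *
      (MA 1 * ρth β B α * MA 1 + MA (-1) * ρth β B α * MA (-1))).trace
    let EB : ℝ → ℂ := fun θ => (Ham B α *
      (UB θ 1 * MA 1 * ρth β B α * MA 1 * (UB θ 1)ᴴ
        + UB θ (-1) * MA (-1) * ρth β B α * MA (-1) * (UB θ (-1))ᴴ)).trace
    (∀ θ : ℝ, EB θ - EA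
        = ((p * (1 - Real.cos (2 * θ)) - q * Real.sin (2 * θ) : ℝ) : ℂ)) ∧
    IsLeast (Set.range fun θ : ℝ => p * (1 - Real.cos (2 * θ)) - q * Real.sin (2 * θ))
      (p - Real.sqrt (p ^ 2 + q ^ 2)) ∧
    (q ≠ 0 → p - Real.sqrt (p ^ 2 + q ^ 2) < 0) :=
  teleported_energy_thermal_general β B α

end
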